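/- arXiv:1510.00003 — 2 statements merged into one kernel-verified Lean document; each statement's English description precedes it below -/
import Mathlib

section
/- For every t > 1, c > 0 and ε ∈ (0,1) there exists δ > 0 with δ < t − 1 such that for every r with t − δ < r < t and every x ∈ ℝ with f_t(x) ≥ c, one has (1−ε) f_t(x) ≤ f_r(x) < f_t(x). -/
open MeasureTheory

/-- `f_t(x) = inf { y > 0 : ∫ (s²+1)/((x−s)²+y²) dρ(s) ≤ 1/(t−1) }`. -/
noncomputable def fFn (ρ : Measure ℝ) (t : ℝ) (x : ℝ) : ℝ :=
  sInf {y : ℝ | 0 < y ∧ (∫ s, (s ^ 2 + 1) / ((x - s) ^ 2 + y ^ 2) ∂ρ) ≤ 1 / (t - 1)}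

/-!
Write `F(x, y) = ∫ (s² + 1) / ((x - s)² + y²) dρ(s)`, so that `f_t(x)` is the infimum of the
sublevel set `{y > 0 | F(x, y) ≤ 1/(t - 1)}`. The map `y ↦ F(x, y)` is antitone and
`y ↦ y² F(x, y)` is monotone; these two facts alone give `F(x, f_t x) = 1/(t - 1)` whenever
`f_t x > 0`, and make `t ↦ f_t x` strictly increasing there. For the uniform lower bound,
`F(x, f_t x) = 1/(t - 1)` keeps `x` within a fixed distance of the compact support of `ρ`, and
then, once `f_t x ≥ c`, shrinking `y` by the factor `1 - ε` multiplies `F(x, y)` by at least a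
fixed `κ > 1`. Hence `f_r x ≥ (1 - ε) f_t x` as soon as `(t - 1)/(r - 1) < κ`.
-/

open Set Metric

noncomputable def sublevelInf (φ : ℝ → ℝ) (a : ℝ) : ℝ :=
  sInf {y : ℝ | 0 < y ∧ φ y ≤ a}

section sublevelInf

variable {φ : ℝ → ℝ} {a b : ℝ}

lemma sublevelInf_le {y : ℝ} (hy : 0 < y) (h : φ y ≤ a) : sublevelInf φ a ≤ y :=
  csInf_le ⟨0, fun _ hz ↦ hz.1.le⟩ ⟨hy, h⟩

lemma le_sublevelInf_of_lt_map (hφ : AntitoneOn φ (Ioi 0))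
    (hne : {y : ℝ | 0 < y ∧ φ y ≤ a}.Nonempty) {w : ℝ} (hw : a < φ w) : w ≤ sublevelInf φ a := by
  refine le_csInf hne fun z ⟨hz, hza⟩ ↦ ?_
  by_contra! hzw
  exact (hw.trans_le ((hφ hz (hz.trans hzw) hzw.le).trans hza)).false

lemma sublevelInf_nonempty (h : 0 < sublevelInf φ a) : {y : ℝ | 0 < y ∧ φ y ≤ a}.Nonempty := by
  by_contra hne
  rw [not_nonempty_iff_eq_empty] at hne
  simp [sublevelInf, hne] at h

variable (hφ : MonotoneOn (fun y ↦ y ^ 2 * φ y) (Ioi 0))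
include hφ

lemma map_sublevelInf_le (ha : 0 < a) (hpos : 0 < sublevelInf φ a) :
    φ (sublevelInf φ a) ≤ a := by
  set y₀ := sublevelInf φ a
  suffices √(y₀ ^ 2 * φ y₀ / a) ≤ y₀ by
    rw [Real.sqrt_le_left hpos.le, div_le_iff₀ ha] at this
    nlinarith [pow_pos hpos 2]
  refine le_csInf (sublevelInf_nonempty hpos) fun z ⟨hz, hza⟩ ↦ ?_
  rw [Real.sqrt_le_left hz.le, div_le_iff₀ ha]
  calc y₀ ^ 2 * φ y₀ ≤ z ^ 2 * φ z := hφ hpos hz (sublevelInf_le hz hza)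
    _ ≤ z ^ 2 * a := by gcongr

lemma le_map_sublevelInf (ha : 0 < a) (hpos : 0 < sublevelInf φ a) :
    a ≤ φ (sublevelInf φ a) := by
  set y₀ := sublevelInf φ a
  suffices y₀ ≤ √(y₀ ^ 2 * φ y₀ / a) by
    rw [Real.le_sqrt' hpos, le_div_iff₀ ha] at this
    nlinarith [pow_pos hpos 2]
  refine le_of_forall_lt_imp_le_of_dense fun z hzy ↦ ?_
  rcases le_or_gt z 0 with hz | hz
  · exact hz.trans (Real.sqrt_nonneg _)
  have hza : a < φ z := by
    by_contra! h
    exact (sublevelInf_le hz h).not_gt hzy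
  rw [Real.le_sqrt' hz, le_div_iff₀ ha]
  calc z ^ 2 * a ≤ z ^ 2 * φ z := by gcongr
    _ ≤ y₀ ^ 2 * φ y₀ := hφ hz hpos hzy.le

lemma sublevelInf_lt_sublevelInf (ha : 0 < a) (hab : a < b) (hpos : 0 < sublevelInf φ a) :
    sublevelInf φ b < sublevelInf φ a := by
  set y₀ := sublevelInf φ a
  set l := √(a / b)
  have hb : 0 < b := ha.trans hab
  have hl0 : 0 < l := Real.sqrt_pos.mpr (div_pos ha hb)
  have hl1 : l < 1 := by
    rw [Real.sqrt_lt' one_pos, one_pow, div_lt_one hb]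
    exact hab
  have hl2 : l ^ 2 = a / b := Real.sq_sqrt (div_pos ha hb).le
  refine (sublevelInf_le (mul_pos hl0 hpos) ?_).trans_lt (mul_lt_of_lt_one_left hpos hl1)
  have hscale : (l * y₀) ^ 2 * φ (l * y₀) ≤ y₀ ^ 2 * a :=
    (hφ (mul_pos hl0 hpos) hpos (mul_le_of_le_one_left hpos.le hl1.le)).trans
      (mul_le_mul_of_nonneg_left (map_sublevelInf_le hφ ha hpos) (sq_nonneg _))
  rw [mul_pow, hl2] at hscale
  calc φ (l * y₀) ≤ y₀ ^ 2 * a / (a / b * y₀ ^ 2) := by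
        rwa [le_div_iff₀' (by positivity)]
    _ = b := by field_simp

end sublevelInf

noncomputable def poissonIntegral (ρ : Measure ℝ) (x y : ℝ) : ℝ :=
  ∫ s, (s ^ 2 + 1) / ((x - s) ^ 2 + y ^ 2) ∂ρ

lemma fFn_eq_sublevelInf (ρ : Measure ℝ) (t x : ℝ) :
    fFn ρ t x = sublevelInf (poissonIntegral ρ x) (1 / (t - 1)) := rfl

lemma integrable_sq_add_one_of_ae_mem {ρ : Measure ℝ} [IsFiniteMeasure ρ] {K : Set ℝ}
    (hK : IsCompact K) (hρK : ∀ᵐ s ∂ρ, s ∈ K) : Integrable (fun s : ℝ ↦ s ^ 2 + 1) ρ := by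
  rw [← Measure.restrict_eq_self_of_ae_mem hρK]
  exact (by fun_prop : Continuous fun s : ℝ ↦ s ^ 2 + 1).continuousOn.integrableOn_compact hK

section poissonIntegral

variable {ρ : Measure ℝ} (hρ : Integrable (fun s : ℝ ↦ s ^ 2 + 1) ρ) {x y : ℝ}
include hρ

lemma integrable_poissonKernel {d : ℝ} (hd : ∀ᵐ s ∂ρ, d ≤ (x - s) ^ 2) (hdy : 0 < d + y ^ 2) :
    Integrable (fun s ↦ (s ^ 2 + 1) / ((x - s) ^ 2 + y ^ 2)) ρ := by
  refine (hρ.div_const (d + y ^ 2)).mono' (by fun_prop : Measurable _).aestronglyMeasurable ?_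
  filter_upwards [hd] with s hs
  rw [Real.norm_of_nonneg (by positivity)]
  gcongr

lemma integrable_poissonKernel_of_ne_zero (hy : y ≠ 0) :
    Integrable (fun s ↦ (s ^ 2 + 1) / ((x - s) ^ 2 + y ^ 2)) ρ :=
  integrable_poissonKernel hρ (d := 0) (.of_forall fun _ ↦ sq_nonneg _) (by positivity)

lemma poissonIntegral_antitoneOn (x : ℝ) : AntitoneOn (poissonIntegral ρ x) (Ioi 0) :=
  fun y (hy : 0 < y) y' (hy' : 0 < y') hyy' ↦
    integral_mono (integrable_poissonKernel_of_ne_zero hρ hy'.ne')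
      (integrable_poissonKernel_of_ne_zero hρ hy.ne') fun s ↦ by dsimp only; gcongr

lemma sq_mul_poissonIntegral_monotoneOn (x : ℝ) :
    MonotoneOn (fun y ↦ y ^ 2 * poissonIntegral ρ x y) (Ioi 0) := by
  intro y (hy : 0 < y) y' (hy' : 0 < y') hyy'
  simp only [poissonIntegral, ← integral_const_mul]
  refine integral_mono ((integrable_poissonKernel_of_ne_zero hρ hy.ne').const_mul _)
    ((integrable_poissonKernel_of_ne_zero hρ hy'.ne').const_mul _) fun s ↦ ?_
  have hy2 : y ^ 2 ≤ y' ^ 2 := pow_le_pow_left₀ hy.le hyy' 2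
  rw [mul_div_assoc', mul_div_assoc', div_le_div_iff₀ (by positivity) (by positivity)]
  nlinarith [mul_le_mul_of_nonneg_right hy2
    (mul_nonneg (sq_nonneg (x - s)) (by positivity : (0 : ℝ) ≤ s ^ 2 + 1))]

lemma poissonIntegral_le {d : ℝ} (hd : ∀ᵐ s ∂ρ, d ≤ (x - s) ^ 2) (hdy : 0 < d + y ^ 2) :
    poissonIntegral ρ x y ≤ (∫ s, s ^ 2 + 1 ∂ρ) / (d + y ^ 2) := by
  rw [← integral_div]
  refine integral_mono_ae (integrable_poissonKernel hρ hd hdy) (hρ.div_const _) ?_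
  filter_upwards [hd] with s hs
  gcongr

lemma infDist_le_of_le_poissonIntegral {K : Set ℝ} (hρK : ∀ᵐ s ∂ρ, s ∈ K) {a : ℝ} (ha : 0 < a)
    (h : a ≤ poissonIntegral ρ x y) : infDist x K ≤ √((∫ s, s ^ 2 + 1 ∂ρ) / a) := by
  by_contra! hlt
  have hd : 0 < infDist x K := (Real.sqrt_nonneg _).trans_lt hlt
  rw [Real.sqrt_lt' hd, div_lt_iff₀ ha] at hlt
  have hle := poissonIntegral_le hρ (x := x) (y := y) (d := infDist x K ^ 2) ?_ (by positivity)
  · rw [le_div_iff₀ (by positivity)] at hle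
    nlinarith [sq_nonneg y]
  filter_upwards [hρK] with s hs
  rw [← sq_abs (x - s), ← Real.dist_eq]
  gcongr
  exact infDist_le_dist_of_mem hs

lemma sq_sub_le_of_le_poissonIntegral {K : Set ℝ} (hK : Bornology.IsBounded K)
    (hρK : ∀ᵐ s ∂ρ, s ∈ K) {a : ℝ} (ha : 0 < a) (h : a ≤ poissonIntegral ρ x y) :
    ∀ᵐ s ∂ρ, (x - s) ^ 2 ≤ (√((∫ s, s ^ 2 + 1 ∂ρ) / a) + diam K) ^ 2 := by
  filter_upwards [hρK] with s hs
  rw [← sq_abs, ← Real.dist_eq]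
  gcongr
  calc dist x s ≤ infDist x K + diam K := dist_le_infDist_add_diam hK hs
    _ ≤ _ := by gcongr; exact infDist_le_of_le_poissonIntegral hρ hρK ha h

lemma mul_poissonIntegral_le {D c l : ℝ} (hD : ∀ᵐ s ∂ρ, (x - s) ^ 2 ≤ D) (hD0 : 0 ≤ D)
    (hc : 0 < c) (hcy : c ≤ y) (hl0 : 0 < l) (hl1 : l ≤ 1) :
    (D + c ^ 2) / (D + l ^ 2 * c ^ 2) * poissonIntegral ρ x y ≤ poissonIntegral ρ x (l * y) := by
  have hy : 0 < y := hc.trans_le hcy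
  rw [poissonIntegral, ← integral_const_mul]
  refine integral_mono_ae ((integrable_poissonKernel_of_ne_zero hρ hy.ne').const_mul _)
    (integrable_poissonKernel_of_ne_zero hρ (mul_pos hl0 hy).ne') ?_
  filter_upwards [hD] with s hs
  rw [div_mul_div_comm, div_le_div_iff₀ (by positivity) (by positivity)]
  have hl2 : l ^ 2 ≤ 1 := pow_le_one₀ hl0.le hl1
  -- the difference of the two sides is `(1 - l²) (y² D - c² (x - s)²)`
  have key : (D + c ^ 2) * ((x - s) ^ 2 + (l * y) ^ 2) ≤
      (D + l ^ 2 * c ^ 2) * ((x - s) ^ 2 + y ^ 2) := by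
    nlinarith [mul_le_mul hs (pow_le_pow_left₀ hc.le hcy 2) (sq_nonneg c) hD0]
  nlinarith [mul_le_mul_of_nonneg_left key (by positivity : (0 : ℝ) ≤ s ^ 2 + 1)]

end poissonIntegral

theorem f_left_continuity_general (ρ : Measure ℝ) [IsFiniteMeasure ρ]
    (K : Set ℝ) (hK : IsCompact K) (hρK : ρ Kᶜ = 0)
    (t : ℝ) (ht : 1 < t) (c : ℝ) (hc : 0 < c) (ε : ℝ) (hε0 : 0 < ε) (hε1 : ε < 1) :
    ∃ δ : ℝ, 0 < δ ∧ δ < t - 1 ∧ ∀ r : ℝ, t - δ < r → r < t → ∀ x : ℝ, c ≤ fFn ρ t x →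
      (1 - ε) * fFn ρ t x ≤ fFn ρ r x ∧ fFn ρ r x < fFn ρ t x := by
  have hρK' : ∀ᵐ s ∂ρ, s ∈ K := mem_ae_iff.mpr hρK
  have hρ := integrable_sq_add_one_of_ae_mem hK hρK'
  have ht1 : 0 < t - 1 := sub_pos.mpr ht
  have ha : 0 < 1 / (t - 1) := one_div_pos.mpr ht1
  set D := (√((∫ s, s ^ 2 + 1 ∂ρ) / (1 / (t - 1))) + diam K) ^ 2
  set κ := (D + c ^ 2) / (D + (1 - ε) ^ 2 * c ^ 2)
  have hκ : 1 < κ := by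
    rw [one_lt_div (by positivity)]
    nlinarith [pow_pos hc 2, mul_pos hε0 (by linarith : (0:ℝ) < 2 - ε)]
  have hκ0 : 0 < κ⁻¹ := inv_pos.mpr (zero_lt_one.trans hκ)
  have hκ1 : κ⁻¹ < 1 := inv_lt_one_of_one_lt₀ hκ
  have hlower : 0 < (t - 1) * κ⁻¹ := mul_pos ht1 hκ0
  refine ⟨(t - 1) * (1 - κ⁻¹), by nlinarith, by nlinarith, fun r hr hrt x hx ↦ ?_⟩
  have hy₀ : 0 < fFn ρ t x := hc.trans_le hx
  have hr1 : (t - 1) * κ⁻¹ < r - 1 := by linarith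
  have hlevel : 1 / (t - 1) < 1 / (r - 1) :=
    one_div_lt_one_div_of_lt (by linarith) (by linarith)
  rw [fFn_eq_sublevelInf] at hy₀ hx ⊢
  have hmono := sq_mul_poissonIntegral_monotoneOn hρ x
  have hF := le_map_sublevelInf hmono ha hy₀
  refine ⟨le_sublevelInf_of_lt_map (poissonIntegral_antitoneOn hρ x)
    ⟨_, hy₀, (map_sublevelInf_le hmono ha hy₀).trans hlevel.le⟩ ?_,
    sublevelInf_lt_sublevelInf hmono ha hlevel hy₀⟩
  calc 1 / (r - 1) < 1 / ((t - 1) * κ⁻¹) := one_div_lt_one_div_of_lt hlower hr1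
    _ = κ * (1 / (t - 1)) := by field_simp
    _ ≤ κ * poissonIntegral ρ x (sublevelInf (poissonIntegral ρ x) (1 / (t - 1))) := by gcongr
    _ ≤ _ := mul_poissonIntegral_le hρ
        (sq_sub_le_of_le_poissonIntegral hρ hK.isBounded hρK' ha hF)
        (by positivity) hc hx (by linarith) (by linarith)

/-- left continuity in `t`, uniformly on `{f_t ≥ c}`. -/
theorem f_left_continuity (ρ : Measure ℝ) [IsFiniteMeasure ρ] (hρ : ρ ≠ 0)
    (K : Set ℝ) (hK : IsCompact K) (hρK : ρ Kᶜ = 0)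
    (t : ℝ) (ht : 1 < t) (c : ℝ) (hc : 0 < c) (ε : ℝ) (hε0 : 0 < ε) (hε1 : ε < 1) :
    ∃ δ : ℝ, 0 < δ ∧ δ < t - 1 ∧ ∀ r : ℝ, t - δ < r → r < t → ∀ x : ℝ, c ≤ fFn ρ t x →
      (1 - ε) * fFn ρ t x ≤ fFn ρ r x ∧ fFn ρ r x < fFn ρ t x :=
  f_left_continuity_general ρ K hK hρK t ht c hc ε hε0 hε1
end

section
/- If t > 1 and x ∈ ℝ satisfies g(x) = 1/(t−1), then f_t(x) = 0 and x belongs to the closure of V_t⁺. -/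
/-!
Averaging `g` over `[x - h, x + h]` strictly increases it. By Tonelli the average is
`∫ (s² + 1) · m(s) dρ(s)` with `m(s)` the mean of `1/(y - s)²` over `y ∈ [x - h, x + h]`, and
`m(s) = 1/((x - s)² - h²) > 1/(x - s)²` if `|x - s| > h`, `m(s) = ∞` otherwise; the atom of `ρ` at
`x` vanishes because `g x < ∞`. Hence `g` has no local maximum where it is finite, so a point with
`g x = 1/(t - 1)` is a limit of points of `V_t⁺`. That `f_t x = 0` is simpler: for every `y` the
integrand defining `f_t` is dominated by that of `g`.
-/

open MeasureTheory

/-- The function `g(x) = ∫ (s²+1)/(x−s)² dρ(s)`, valued in `[0,∞]`; the integrand is `+∞`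
at `s = x` (since in `ℝ≥0∞`, division of a nonzero quantity by `0` yields `∞`). -/
noncomputable def gFn (ρ : Measure ℝ) (x : ℝ) : ENNReal :=
  ∫⁻ s, ENNReal.ofReal (s ^ 2 + 1) / ENNReal.ofReal ((x - s) ^ 2) ∂ρ

/-- The set `V_t⁺ = {x ∈ ℝ : g(x) > 1/(t−1)}`. -/
def Vplus (ρ : Measure ℝ) (t : ℝ) : Set ℝ :=
  {x : ℝ | ENNReal.ofReal (1 / (t - 1)) < gFn ρ x}

open Set Interval Asymptotics

theorem intervalIntegral_inv_sq_sub {a b s : ℝ} (hs : s ∉ [[a, b]]) :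
    ∫ y in a..b, ((y - s) ^ 2)⁻¹ = (a - s)⁻¹ - (b - s)⁻¹ := by
  have hne : ∀ y ∈ [[a, b]], y - s ≠ 0 := fun y hy hys => hs (sub_eq_zero.1 hys ▸ hy)
  have hderiv : ∀ y ∈ [[a, b]], HasDerivAt (fun y => -(y - s)⁻¹) ((y - s) ^ 2)⁻¹ y := by
    intro y hy
    have h := (((hasDerivAt_id' y).sub_const s).inv (hne y hy)).neg
    rwa [neg_div, neg_neg, one_div] at h
  rw [intervalIntegral.integral_eq_sub_of_hasDerivAt hderiv]
  · ring
  · exact (ContinuousOn.inv₀ (by fun_prop) fun y hy => pow_ne_zero 2 (hne y hy)).intervalIntegrable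

theorem not_intervalIntegrable_inv_sq_sub {a b s : ℝ} (hab : a ≠ b) (hs : s ∈ [[a, b]]) :
    ¬IntervalIntegrable (fun y => ((y - s) ^ 2)⁻¹) volume a b := by
  refine not_intervalIntegrable_of_sub_inv_isBigO_punctured (IsBigO.of_bound 1 ?_) hab hs
  filter_upwards [nhdsWithin_le_nhds (Metric.closedBall_mem_nhds s one_pos), self_mem_nhdsWithin]
    with y hy hne
  rw [Metric.mem_closedBall, Real.dist_eq] at hy
  have : 0 < |y - s| := abs_pos.2 (sub_ne_zero.2 hne)
  rw [norm_inv, norm_inv, Real.norm_eq_abs, Real.norm_eq_abs, abs_pow, one_mul, sq]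
  exact inv_anti₀ (by positivity) (mul_le_of_le_one_left this.le hy)

theorem setLIntegral_Icc_inv_sq_sub_eq_top {a b s : ℝ} (hab : a < b) (hs : s ∈ Icc a b) :
    ∫⁻ y in Icc a b, (ENNReal.ofReal ((y - s) ^ 2))⁻¹ = ⊤ := by
  by_contra hfin
  have hint : IntegrableOn (fun y => ((y - s) ^ 2)⁻¹) (Icc a b) := by
    refine (lintegral_ofReal_ne_top_iff_integrable (by fun_prop)
      (ae_of_all _ fun y => by positivity)).1 (ne_top_of_le_ne_top hfin ?_)
    exact lintegral_mono fun y => ENNReal.ofReal_inv_le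
  refine not_intervalIntegrable_inv_sq_sub hab.ne (uIcc_of_le hab.le ▸ hs) ?_
  exact (intervalIntegrable_iff_integrableOn_Icc_of_le hab.le).2 hint

theorem two_mul_div_sq_lt_inv_sub_inv {a h : ℝ} (hh : 0 < h) (ha : h < |a|) :
    2 * h / a ^ 2 < (a - h)⁻¹ - (a + h)⁻¹ := by
  have hha : h ^ 2 < a ^ 2 := by rw [← sq_abs a]; gcongr
  have hprod : (a - h) * (a + h) = a ^ 2 - h ^ 2 := by ring
  rw [inv_sub_inv (by nlinarith) (by nlinarith), hprod,
    div_lt_div_iff₀ (by nlinarith) (by linarith)]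
  nlinarith [pow_pos hh 3]

theorem lt_setLIntegral_Icc_inv_sq_sub {x s h : ℝ} (hh : 0 < h) (hs : s ≠ x) :
    ENNReal.ofReal (2 * h) / ENNReal.ofReal ((x - s) ^ 2) <
      ∫⁻ y in Icc (x - h) (x + h), (ENNReal.ofReal ((y - s) ^ 2))⁻¹ := by
  have hxs : 0 < (x - s) ^ 2 := by have := sub_ne_zero.2 hs.symm; positivity
  by_cases hsI : s ∈ Icc (x - h) (x + h)
  · rw [setLIntegral_Icc_inv_sq_sub_eq_top (by linarith) hsI]
    exact ENNReal.div_lt_top ENNReal.ofReal_ne_top (ENNReal.ofReal_pos.2 hxs).ne'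
  have hsI' : s ∉ [[x - h, x + h]] := by rwa [uIcc_of_le (by linarith)]
  have key : 2 * h / (x - s) ^ 2 < (x - h - s)⁻¹ - (x + h - s)⁻¹ := by
    have ha : h < |x - s| := by
      rw [mem_Icc, not_and_or, not_le, not_le] at hsI
      rw [lt_abs]; rcases hsI with hs | hs <;> [left; right] <;> linarith
    convert two_mul_div_sq_lt_inv_sub_inv hh ha using 3 <;> ring
  have hne : ∀ y ∈ Icc (x - h) (x + h), 0 < (y - s) ^ 2 := fun y hy => by
    have : y - s ≠ 0 := sub_ne_zero.2 fun hys => hsI (hys ▸ hy)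
    positivity
  rw [setLIntegral_congr_fun measurableSet_Icc
      fun y hy => (ENNReal.ofReal_inv_of_pos (hne y hy)).symm,
    ← ofReal_integral_eq_lintegral_ofReal, integral_Icc_eq_integral_Ioc,
    ← intervalIntegral.integral_of_le (by linarith), intervalIntegral_inv_sq_sub hsI',
    ← ENNReal.ofReal_div_of_pos hxs, ENNReal.ofReal_lt_ofReal_iff]
  · exact key
  · exact (by positivity : (0:ℝ) < 2 * h / (x - s) ^ 2).trans key
  · exact (continuousOn_of_forall_continuousAt fun y hy => by
      fun_prop (disch := exact (hne y hy).ne')).integrableOn_Icc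
  · exact ae_of_all _ fun y => by positivity

section gFn

variable (ρ : Measure ℝ)

theorem measurable_gFn_integrand :
    Measurable fun p : ℝ × ℝ =>
      ENNReal.ofReal (p.2 ^ 2 + 1) / ENNReal.ofReal ((p.1 - p.2) ^ 2) := by
  fun_prop

theorem integral_le_of_gFn_le {x c : ℝ} (hc : 0 ≤ c) (hx : gFn ρ x ≤ ENNReal.ofReal c) (y : ℝ) :
    ∫ s, (s ^ 2 + 1) / ((x - s) ^ 2 + y ^ 2) ∂ρ ≤ c := by
  rw [integral_eq_lintegral_of_nonneg_ae (ae_of_all _ fun s => by positivity)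
    (by fun_prop : Measurable fun s => (s ^ 2 + 1) / ((x - s) ^ 2 + y ^ 2)).aestronglyMeasurable]
  refine ENNReal.toReal_le_of_le_ofReal hc (le_trans (lintegral_mono fun s => ?_) hx)
  exact (ENNReal.ofReal_div_le (by positivity)).trans
    (ENNReal.div_le_div_left (ENNReal.ofReal_le_ofReal (le_add_of_nonneg_right (sq_nonneg y))) _)

theorem fFn_eq_zero_of_gFn_le {t x : ℝ} (ht : 1 < t)
    (hx : gFn ρ x ≤ ENNReal.ofReal (1 / (t - 1))) : fFn ρ t x = 0 := by
  have hset : {y : ℝ | 0 < y ∧ ∫ s, (s ^ 2 + 1) / ((x - s) ^ 2 + y ^ 2) ∂ρ ≤ 1 / (t - 1)} =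
      Ioi 0 :=
    ext fun y => and_iff_left
      (integral_le_of_gFn_le ρ (one_div_pos.2 (sub_pos.2 ht)).le hx y)
  rw [fFn, hset, csInf_Ioi]

theorem ae_ne_of_gFn_ne_top {x : ℝ} (hx : gFn ρ x ≠ ⊤) : ∀ᵐ s ∂ρ, s ≠ x := by
  filter_upwards [ae_lt_top (by fun_prop) hx] with s hs
  rintro rfl
  simp [ENNReal.div_zero (ENNReal.ofReal_pos.2 (by positivity : (0 : ℝ) < s ^ 2 + 1)).ne'] at hs

theorem setLIntegral_gFn [SFinite ρ] (I : Set ℝ) :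
    ∫⁻ y in I, gFn ρ y =
      ∫⁻ s, ENNReal.ofReal (s ^ 2 + 1) * (∫⁻ y in I, (ENNReal.ofReal ((y - s) ^ 2))⁻¹) ∂ρ := by
  unfold gFn
  rw [lintegral_lintegral_swap measurable_gFn_integrand.aemeasurable]
  refine lintegral_congr fun s => ?_
  simp only [div_eq_mul_inv]
  exact lintegral_const_mul' _ _ ENNReal.ofReal_ne_top

theorem mul_gFn_lt_setLIntegral_gFn [SFinite ρ] (hρ : ρ ≠ 0) {x h : ℝ} (hx : gFn ρ x ≠ ⊤)
    (hh : 0 < h) :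
    ENNReal.ofReal (2 * h) * gFn ρ x < ∫⁻ y in Icc (x - h) (x + h), gFn ρ y := by
  have hfin : ENNReal.ofReal (2 * h) * gFn ρ x ≠ ⊤ := ENNReal.mul_ne_top ENNReal.ofReal_ne_top hx
  rw [gFn, ← lintegral_const_mul' _ _ ENNReal.ofReal_ne_top] at hfin ⊢
  rw [setLIntegral_gFn]
  have hmeas : Measurable fun s : ℝ =>
      ENNReal.ofReal (s ^ 2 + 1) *
        ∫⁻ y in Icc (x - h) (x + h), (ENNReal.ofReal ((y - s) ^ 2))⁻¹ :=
    (by fun_prop : Measurable fun s : ℝ => ENNReal.ofReal (s ^ 2 + 1)).mul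
      (Measurable.lintegral_prod_left'
        (f := fun p : ℝ × ℝ => (ENNReal.ofReal ((p.1 - p.2) ^ 2))⁻¹) (by fun_prop))
  refine lintegral_strict_mono hρ hmeas.aemeasurable hfin ?_
  filter_upwards [ae_ne_of_gFn_ne_top ρ hx] with s hs
  calc ENNReal.ofReal (2 * h) * (ENNReal.ofReal (s ^ 2 + 1) / ENNReal.ofReal ((x - s) ^ 2))
      = ENNReal.ofReal (s ^ 2 + 1) * (ENNReal.ofReal (2 * h) / ENNReal.ofReal ((x - s) ^ 2)) := by
        simp only [div_eq_mul_inv]; ring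
    _ < _ := ENNReal.mul_lt_mul_right (ENNReal.ofReal_pos.2 (by positivity)).ne'
        ENNReal.ofReal_ne_top (lt_setLIntegral_Icc_inv_sq_sub hh hs)

theorem exists_mem_Icc_gFn_lt [SFinite ρ] (hρ : ρ ≠ 0) {x h : ℝ} (hx : gFn ρ x ≠ ⊤)
    (hh : 0 < h) :
    ∃ y ∈ Icc (x - h) (x + h), gFn ρ x < gFn ρ y := by
  by_contra! hle
  refine (mul_gFn_lt_setLIntegral_gFn ρ hρ hx hh).not_ge ?_
  calc ∫⁻ y in Icc (x - h) (x + h), gFn ρ y ≤ ∫⁻ _ in Icc (x - h) (x + h), gFn ρ x :=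
        setLIntegral_mono' measurableSet_Icc hle
    _ = ENNReal.ofReal (2 * h) * gFn ρ x := by
        rw [setLIntegral_const, Real.volume_Icc, mul_comm]; ring_nf

theorem mem_closure_setOf_gFn_lt [SFinite ρ] (hρ : ρ ≠ 0) {x : ℝ} (hx : gFn ρ x ≠ ⊤) :
    x ∈ closure {y | gFn ρ x < gFn ρ y} := by
  refine Metric.mem_closure_iff.2 fun ε hε => ?_
  obtain ⟨y, ⟨hy₁, hy₂⟩, hlt⟩ := exists_mem_Icc_gFn_lt ρ hρ hx (half_pos hε)
  exact ⟨y, hlt, by rw [Real.dist_eq, abs_lt]; constructor <;> linarith⟩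

end gFn

theorem boundary_point_in_closure_general (ρ : Measure ℝ) [IsFiniteMeasure ρ] (hρ : ρ ≠ 0)
    (t : ℝ) (ht : 1 < t) (x : ℝ) (hx : gFn ρ x = ENNReal.ofReal (1 / (t - 1))) :
    fFn ρ t x = 0 ∧ x ∈ closure (Vplus ρ t) := by
  refine ⟨fFn_eq_zero_of_gFn_le ρ ht hx.le, ?_⟩
  have hVplus : Vplus ρ t = {y | gFn ρ x < gFn ρ y} := by rw [hx]; rfl
  exact hVplus ▸ mem_closure_setOf_gFn_lt ρ hρ (hx ▸ ENNReal.ofReal_ne_top)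

/-- if `g(x) = 1/(t−1)` then `f_t(x) = 0` and `x` lies in the closure
of `V_t⁺`. -/
theorem boundary_point_in_closure (ρ : Measure ℝ) [IsFiniteMeasure ρ] (hρ : ρ ≠ 0)
    (K : Set ℝ) (hK : IsCompact K) (hρK : ρ Kᶜ = 0)
    (t : ℝ) (ht : 1 < t) (x : ℝ) (hx : gFn ρ x = ENNReal.ofReal (1 / (t - 1))) :
    fFn ρ t x = 0 ∧ x ∈ closure (Vplus ρ t) :=
  boundary_point_in_closure_general ρ hρ t ht x hx
end
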